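/- arXiv:1207.1258 — 2 statements merged into one kernel-verified Lean document; each statement's English description precedes it below -/
import Mathlib

section
/- Let F be a differential field with constants K, and let M ∈ F^{2×2} be upper triangular with M M' = M' M. Then M is of Type 1, i.e., an F-linear combination of pairwise commuting constant matrices. -/
def IsDeriv {F : Type*} [Field F] (d : F → F) : Prop :=
  (∀ a b, d (a + b) = d a + d b) ∧ (∀ a b, d (a * b) = d a * b + a * d b)

/-- `M` is of Type 1: an `F`-linear combination of pairwise commuting matrices
with constant entries. -/
def IsType1 {F : Type*} [Field F] (d : F → F) {n : ℕ}
    (M : Matrix (Fin n) (Fin n) F) : Prop :=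
  ∃ (k : ℕ) (f : Fin k → F) (C : Fin k → Matrix (Fin n) (Fin n) F),
    (∀ j p q, d (C j p q) = 0) ∧
    (∀ i j, C i * C j = C j * C i) ∧
    M = ∑ j, f j • C j

/-!
Write `M = !![a, b; 0, c]`. The `(0, 1)` entry of `M * M' = M' * M` reads `b' (a - c) = b (a - c)'`:
the Wronskian of `b` and `a - c` vanishes. If `a = c`, then `M = a • 1 + b • !![0, 1; 0, 0]`.
Otherwise `g := b / (a - c)` is a constant and `M = c • 1 + (a - c) • !![1, g; 0, 0]`.
Either way `M` is an `F`-combination of `1` and a single constant matrix, which commute.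
-/

namespace IsDeriv

variable {F : Type*} [Field F] {d : F → F}

def toDerivation (hd : IsDeriv d) : Derivation ℤ F F :=
  Derivation.mk' (AddMonoidHom.mk' d hd.1).toIntLinearMap fun a b => by
    simp only [AddMonoidHom.coe_toIntLinearMap, AddMonoidHom.mk'_apply, smul_eq_mul, hd.2]
    ring

@[simp]
theorem toDerivation_apply (hd : IsDeriv d) (a : F) : hd.toDerivation a = d a := rfl

theorem map_zero (hd : IsDeriv d) : d 0 = 0 :=
  hd.toDerivation.map_zero

theorem map_one (hd : IsDeriv d) : d 1 = 0 :=
  hd.toDerivation.map_one_eq_zero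

theorem map_sub (hd : IsDeriv d) (a b : F) : d (a - b) = d a - d b :=
  hd.toDerivation.map_sub a b

theorem map_div_eq_zero (hd : IsDeriv d) {b x : F} (h : d b * x = b * d x) :
    d (b / x) = 0 := by
  have := hd.toDerivation.leibniz_div b x
  simp only [toDerivation_apply, smul_eq_mul] at this
  rw [this, mul_comm x, h, sub_self, mul_zero]

end IsDeriv

theorem isType1_smul_one_add_smul {F : Type*} [Field F] {d : F → F} (hd : IsDeriv d) {n : ℕ}
    {C : Matrix (Fin n) (Fin n) F} (hC : ∀ p q, d (C p q) = 0) (f g : F) :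
    IsType1 d (f • 1 + g • C) := by
  refine ⟨2, ![f, g], ![1, C], ?_, ?_, ?_⟩
  · intro j p q
    fin_cases j
    · by_cases hpq : p = q <;> simp [hpq, hd.map_zero, hd.map_one]
    · exact hC p q
  · intro i j
    fin_cases i <;> fin_cases j <;> simp
  · simp [Fin.sum_univ_two]

/-- An upper triangular `2×2` matrix over a differential field that commutes with
its derivative is of Type 1. -/
theorem upper_triangular_2x2_type1 {F : Type*} [Field F]
    (d : F → F) (hd : IsDeriv d)
    (M : Matrix (Fin 2) (Fin 2) F)
    (htri : M.BlockTriangular id)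
    (hcomm : M * M.map d = M.map d * M) :
    IsType1 d M := by
  have hM : M = !![M 0 0, M 0 1; 0, M 1 1] := by
    rw [← htri (show (0 : Fin 2) < 1 by decide)]
    exact Matrix.eta_fin_two M
  set a := M 0 0
  set b := M 0 1
  set c := M 1 1
  have hentry : a * d b + b * d c = d a * b + d b * c := by
    rw [hM] at hcomm
    simpa [Matrix.mul_apply, Fin.sum_univ_two] using congrFun (congrFun hcomm 0) 1
  have hwronskian : d b * (a - c) = b * d (a - c) := by
    rw [hd.map_sub]
    linear_combination hentry
  by_cases hac : a = c
  · have hN : ∀ p q, d (!![0, 1; 0, 0] p q) = 0 := by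
      intro p q
      fin_cases p <;> fin_cases q <;> simp [hd.map_zero, hd.map_one]
    convert isType1_smul_one_add_smul hd hN a b using 1
    rw [hM]
    ext p q
    fin_cases p <;> fin_cases q <;> simp [hac]
  · have hE : ∀ p q, d (!![1, b / (a - c); 0, 0] p q) = 0 := by
      intro p q
      fin_cases p <;> fin_cases q <;>
        simp [hd.map_zero, hd.map_one, hd.map_div_eq_zero hwronskian]
    convert isType1_smul_one_add_smul hd hE c (a - c) using 1
    rw [hM]
    ext p q
    fin_cases p <;> fin_cases q <;> simp [mul_div_cancel₀ b (sub_ne_zero.mpr hac)]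
end

section
/- Let F be a differential field with constants K. If M ∈ F^{3×3} is K-triangularizable and satisfies M M' = M' M, then M is of Type 1. -/
/-!
Conjugating by the constant matrix `T` commutes with differentiation, so we may take `M` upper
triangular, `M = !![a, x, z; 0, b, y; 0, 0, c]`. Then `M M' = M' M` says that the
Wronskians `W(a - b, x)` and `W(b - c, y)` vanish and `W(a - c, z) = W(y, x)`, and a vanishing
Wronskian `W(p, q)` with `p ≠ 0` makes `q` a constant multiple of `p` (for the corner entry,
apply this to `z` corrected by a constant multiple of `x` or `y`). Splitting into cases
according to which diagonal entries coincide, this writes `M = f₀ • 1 + f₁ • C₁ + f₂ • C₂` with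
`C₁`, `C₂` commuting constant matrices.
-/

def IsDeriv.toDerivation_s17 {F : Type*} [Field F] {d : F → F} (hd : IsDeriv d) :
    Derivation ℤ F F :=
  Derivation.mk' (AddMonoidHom.mk' d hd.1).toIntLinearMap fun a b => by
    simp [hd.2 a b, mul_comm, add_comm]

namespace Derivation

variable {R F : Type*} [CommRing R] [Field F] [Algebra R F] (D : Derivation R F F)

def constants : Subfield F where
  carrier := {a | D a = 0}
  zero_mem' := D.map_zero
  one_mem' := D.map_one_eq_zero
  add_mem' ha hb := by simp_all
  mul_mem' ha hb := by simp_all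
  neg_mem' ha := by simp_all
  inv_mem' a ha := by simp_all [leibniz_inv]

@[simp]
theorem map_coe_constants (k : D.constants) : D k = 0 :=
  k.2

def wronskian (p q : F) : F :=
  p * D q - D p * q

theorem exists_eq_mul_of_wronskian_eq_zero {p q : F} (hp : p ≠ 0) (h : D.wronskian p q = 0) :
    ∃ k : D.constants, q = k * p :=
  ⟨⟨q / p, by simp [constants, leibniz_div, mul_comm q, show p * D q - D p * q = 0 from h]⟩,
    by simp [hp]⟩

section Matrix

variable {m n o : Type*} [Fintype n]

theorem map_matrix_mul (A : Matrix m n F) (B : Matrix n o F) :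
    (A * B).map D = A.map D * B + A * B.map D := by
  ext i j
  simp [Matrix.mul_apply, Finset.sum_add_distrib, mul_comm, add_comm]

theorem map_nonsing_inv_eq_zero [DecidableEq n] {A : Matrix n n F} (hA : IsUnit A)
    (h : A.map D = 0) : A⁻¹.map D = 0 := by
  have hdet := (Matrix.isUnit_iff_isUnit_det A).mp hA
  have hone : (1 : Matrix n n F).map D = 0 := by
    ext i j
    simp [Matrix.one_apply, apply_ite D]
  have : A⁻¹.map D * A = 0 := by
    simpa [h, Matrix.nonsing_inv_mul A hdet, hone] using (D.map_matrix_mul A⁻¹ A).symm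
  simpa [Matrix.mul_nonsing_inv_cancel_right _ _ hdet] using congrArg (· * A⁻¹) this

theorem map_mul_mul_of_map_eq_zero (M : Matrix n n F) {A B : Matrix n n F} (hA : A.map D = 0)
    (hB : B.map D = 0) : (A * M * B).map D = A * M.map D * B := by
  simp [map_matrix_mul, hA, hB]

theorem commute_map_nonsing_inv_mul_mul [DecidableEq n] {M T : Matrix n n F} (hT : IsUnit T)
    (hT₀ : T.map D = 0) (hM : Commute M (M.map D)) :
    Commute (T⁻¹ * M * T) ((T⁻¹ * M * T).map D) := by
  have hdet := (Matrix.isUnit_iff_isUnit_det T).mp hT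
  rw [D.map_mul_mul_of_map_eq_zero M (D.map_nonsing_inv_eq_zero hT hT₀) hT₀]
  simp only [Commute, SemiconjBy, Matrix.mul_assoc, Matrix.mul_nonsing_inv_cancel_left _ _ hdet]
  rw [← Matrix.mul_assoc M, hM.eq, Matrix.mul_assoc]

end Matrix

section Type1

variable {n : ℕ}

theorem isType1_mul_mul {N A B : Matrix (Fin n) (Fin n) F} (h : IsType1 D N)
    (hA : A.map D = 0) (hB : B.map D = 0) (hBA : B * A = 1) : IsType1 D (A * N * B) := by
  obtain ⟨k, f, C, hC, hcomm, rfl⟩ := h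
  refine ⟨k, f, fun j => A * C j * B, fun j p q => ?_, fun i j => ?_, ?_⟩
  · rw [← Matrix.map_apply (f := D), D.map_mul_mul_of_map_eq_zero (C j) hA hB,
      show (C j).map D = 0 from Matrix.ext (hC j)]
    simp
  · have hconj : ∀ i j, A * C i * B * (A * C j * B) = A * (C i * C j) * B := fun i j => by
      simp only [Matrix.mul_assoc, ← Matrix.mul_assoc B, hBA, Matrix.one_mul]
    rw [hconj, hconj, hcomm]
  · simp [Finset.mul_sum, Finset.sum_mul]

theorem isType1_of_eq_smul_one_add {M : Matrix (Fin n) (Fin n) F}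
    {C₁ C₂ : Matrix (Fin n) (Fin n) D.constants} (hC : Commute C₁ C₂) (f₀ f₁ f₂ : F)
    (hM : M = f₀ • 1 + f₁ • C₁.map (↑) + f₂ • C₂.map (↑)) : IsType1 D M := by
  let C : Fin 3 → Matrix (Fin n) (Fin n) D.constants := ![1, C₁, C₂]
  refine ⟨3, ![f₀, f₁, f₂], fun j => (C j).map (↑), fun j p q => (C j p q).2, fun i j => ?_, ?_⟩
  · have : Commute (C i) (C j) := by
      fin_cases i <;> fin_cases j <;> simp [C, hC, hC.symm]
    exact (this.map D.constants.subtype.mapMatrix).eq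
  · simp [hM, Fin.sum_univ_three, C, Matrix.map_one]

variable {a b c x y z : F}

theorem wronskian_eqs_of_commute_map
    (h : Commute !![a, x, z; 0, b, y; 0, 0, c] (!![a, x, z; 0, b, y; 0, 0, c].map D)) :
    D.wronskian (a - b) x = 0 ∧ D.wronskian (b - c) y = 0 ∧
      D.wronskian (a - c) z = D.wronskian y x := by
  have e₀₁ := congrFun₂ h.eq 0 1
  have e₁₂ := congrFun₂ h.eq 1 2
  have e₀₂ := congrFun₂ h.eq 0 2
  simp only [Matrix.mul_apply, Fin.sum_univ_three, Matrix.map_apply, Matrix.of_apply,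
    Matrix.cons_val', Matrix.cons_val_fin_one, Matrix.cons_val_zero, Matrix.cons_val_one,
    Matrix.cons_val, map_zero, mul_zero, zero_mul, add_zero, zero_add] at e₀₁ e₁₂ e₀₂
  simp only [wronskian, map_sub]
  exact ⟨by linear_combination e₀₁, by linear_combination e₁₂, by linear_combination e₀₂⟩

theorem isType1_triangular_aaa (h : D.wronskian y x = 0) :
    IsType1 D !![a, x, z; 0, a, y; 0, 0, a] := by
  rcases eq_or_ne y 0 with rfl | hy
  · refine D.isType1_of_eq_smul_one_add (C₁ := !![0, 1, 0; 0, 0, 0; 0, 0, 0])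
      (C₂ := !![0, 0, 1; 0, 0, 0; 0, 0, 0]) ?_ a x z ?_
    · ext i j; fin_cases i <;> fin_cases j <;> simp [Matrix.mul_apply, Fin.sum_univ_three]
    · ext i j; fin_cases i <;> fin_cases j <;> simp
  · obtain ⟨k, rfl⟩ := D.exists_eq_mul_of_wronskian_eq_zero hy h
    refine D.isType1_of_eq_smul_one_add (C₁ := !![0, k, 0; 0, 0, 1; 0, 0, 0])
      (C₂ := !![0, 0, 1; 0, 0, 0; 0, 0, 0]) ?_ a y z ?_
    · ext i j; fin_cases i <;> fin_cases j <;> simp [Matrix.mul_apply, Fin.sum_univ_three]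
    · ext i j; fin_cases i <;> fin_cases j <;> simp [mul_comm]

theorem isType1_triangular_aac (hac : a ≠ c) (h₁₂ : D.wronskian (a - c) y = 0)
    (h₀₂ : D.wronskian (a - c) z = D.wronskian y x) :
    IsType1 D !![a, x, z; 0, a, y; 0, 0, c] := by
  have hac' := sub_ne_zero.2 hac
  obtain ⟨k₂, rfl⟩ := D.exists_eq_mul_of_wronskian_eq_zero hac' h₁₂
  have hw : D.wronskian (a - c) (z - k₂ * x) = 0 := by
    simp only [wronskian, map_sub, leibniz, smul_eq_mul, map_coe_constants] at h₀₂ ⊢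
    linear_combination h₀₂
  obtain ⟨k₃, hz⟩ := D.exists_eq_mul_of_wronskian_eq_zero hac' hw
  obtain rfl : z = k₃ * (a - c) + k₂ * x := by linear_combination hz
  refine D.isType1_of_eq_smul_one_add (C₁ := !![1, 0, k₃; 0, 1, k₂; 0, 0, 0])
    (C₂ := !![0, 1, k₂; 0, 0, 0; 0, 0, 0]) ?_ c (a - c) x ?_
  · ext i j; fin_cases i <;> fin_cases j <;> simp [Matrix.mul_apply, Fin.sum_univ_three]
  · ext i j; fin_cases i <;> fin_cases j <;> simp <;> ring

theorem isType1_triangular_aba (hab : a ≠ b) (h₀₁ : D.wronskian (a - b) x = 0)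
    (h₁₂ : D.wronskian (b - a) y = 0) :
    IsType1 D !![a, x, z; 0, b, y; 0, 0, a] := by
  obtain ⟨k₁, rfl⟩ := D.exists_eq_mul_of_wronskian_eq_zero (sub_ne_zero.2 hab) h₀₁
  obtain ⟨k₂, rfl⟩ := D.exists_eq_mul_of_wronskian_eq_zero (sub_ne_zero.2 hab.symm) h₁₂
  refine D.isType1_of_eq_smul_one_add (C₁ := !![0, -k₁, 0; 0, 1, k₂; 0, 0, 0])
    (C₂ := !![0, 0, 1; 0, 0, 0; 0, 0, 0]) ?_ a (b - a) z ?_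
  · ext i j; fin_cases i <;> fin_cases j <;> simp [Matrix.mul_apply, Fin.sum_univ_three]
  · ext i j; fin_cases i <;> fin_cases j <;> simp <;> ring

theorem isType1_triangular_abb (hab : a ≠ b) (h₀₁ : D.wronskian (a - b) x = 0)
    (h₀₂ : D.wronskian (a - b) z = D.wronskian y x) :
    IsType1 D !![a, x, z; 0, b, y; 0, 0, b] := by
  have hab' := sub_ne_zero.2 hab
  obtain ⟨k₁, rfl⟩ := D.exists_eq_mul_of_wronskian_eq_zero hab' h₀₁
  have hw : D.wronskian (a - b) (z + k₁ * y) = 0 := by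
    simp only [wronskian, map_add, map_sub, leibniz, smul_eq_mul, map_coe_constants] at h₀₂ ⊢
    linear_combination h₀₂
  obtain ⟨k₃, hz⟩ := D.exists_eq_mul_of_wronskian_eq_zero hab' hw
  obtain rfl : z = k₃ * (a - b) - k₁ * y := by linear_combination hz
  refine D.isType1_of_eq_smul_one_add (C₁ := !![1, k₁, k₃; 0, 0, 0; 0, 0, 0])
    (C₂ := !![0, 0, -k₁; 0, 0, 1; 0, 0, 0]) ?_ b (a - b) y ?_
  · ext i j; fin_cases i <;> fin_cases j <;> simp [Matrix.mul_apply, Fin.sum_univ_three]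
  · ext i j; fin_cases i <;> fin_cases j <;> simp <;> ring

theorem isType1_triangular_abc (hab : a ≠ b) (hbc : b ≠ c) (hac : a ≠ c)
    (h₀₁ : D.wronskian (a - b) x = 0) (h₁₂ : D.wronskian (b - c) y = 0)
    (h₀₂ : D.wronskian (a - c) z = D.wronskian y x) :
    IsType1 D !![a, x, z; 0, b, y; 0, 0, c] := by
  obtain ⟨k₁, rfl⟩ := D.exists_eq_mul_of_wronskian_eq_zero (sub_ne_zero.2 hab) h₀₁
  have hw : D.wronskian (a - c) (z + k₁ * y) = 0 := by
    simp only [wronskian, map_add, map_sub, leibniz, smul_eq_mul, map_coe_constants] at h₀₂ h₁₂ ⊢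
    linear_combination h₀₂ + k₁ * h₁₂
  obtain ⟨k₃, hz⟩ := D.exists_eq_mul_of_wronskian_eq_zero (sub_ne_zero.2 hac) hw
  obtain ⟨k₂, rfl⟩ := D.exists_eq_mul_of_wronskian_eq_zero (sub_ne_zero.2 hbc) h₁₂
  obtain rfl : z = k₃ * (a - c) - k₁ * (k₂ * (b - c)) := by linear_combination hz
  refine D.isType1_of_eq_smul_one_add (C₁ := !![1, k₁, k₃; 0, 0, 0; 0, 0, 0])
    (C₂ := !![0, -k₁, -(k₁ * k₂); 0, 1, k₂; 0, 0, 0]) ?_ c (a - c) (b - c) ?_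
  · ext i j; fin_cases i <;> fin_cases j <;> simp [Matrix.mul_apply, Fin.sum_univ_three]
  · ext i j; fin_cases i <;> fin_cases j <;> simp <;> ring

theorem isType1_triangular
    (h : Commute !![a, x, z; 0, b, y; 0, 0, c] (!![a, x, z; 0, b, y; 0, 0, c].map D)) :
    IsType1 D !![a, x, z; 0, b, y; 0, 0, c] := by
  obtain ⟨h₀₁, h₁₂, h₀₂⟩ := D.wronskian_eqs_of_commute_map h
  rcases eq_or_ne a b with rfl | hab <;> rcases eq_or_ne a c with rfl | hac
  · exact D.isType1_triangular_aaa (by simpa [wronskian] using h₀₂.symm)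
  · exact D.isType1_triangular_aac hac h₁₂ h₀₂
  · exact D.isType1_triangular_aba hab h₀₁ h₁₂
  · rcases eq_or_ne b c with rfl | hbc
    · exact D.isType1_triangular_abb hab h₀₁ h₀₂
    · exact D.isType1_triangular_abc hab hbc hac h₀₁ h₁₂ h₀₂

theorem isType1_of_blockTriangular {N : Matrix (Fin 3) (Fin 3) F} (hN : N.BlockTriangular id)
    (h : Commute N (N.map D)) : IsType1 D N := by
  rw [Matrix.eta_fin_three N, hN (show (0 : Fin 3) < 1 by decide),
    hN (show (0 : Fin 3) < 2 by decide), hN (show (1 : Fin 3) < 2 by decide)] at h ⊢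
  exact D.isType1_triangular h

end Type1

end Derivation

/-- A `K`-triangularizable `3×3` matrix that commutes with its derivative is of
Type 1. -/
theorem three_by_three_K_triangularizable_type1 {F : Type*} [Field F]
    (d : F → F) (hd : IsDeriv d)
    (M : Matrix (Fin 3) (Fin 3) F)
    (htri : ∃ T : Matrix (Fin 3) (Fin 3) F, IsUnit T ∧ (∀ p q, d (T p q) = 0) ∧
      (T⁻¹ * M * T).BlockTriangular id)
    (hcomm : M * M.map d = M.map d * M) :
    IsType1 d M := by
  obtain ⟨T, hT, hTc, hN⟩ := htri
  let D := hd.toDerivation_s17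
  have hT₀ : T.map D = 0 := Matrix.ext hTc
  have hN₁ : IsType1 D (T⁻¹ * M * T) :=
    D.isType1_of_blockTriangular hN (D.commute_map_nonsing_inv_mul_mul hT hT₀ hcomm)
  have hdet := (Matrix.isUnit_iff_isUnit_det T).mp hT
  have hM := D.isType1_mul_mul hN₁ hT₀ (D.map_nonsing_inv_eq_zero hT hT₀)
    (Matrix.nonsing_inv_mul T hdet)
  rwa [← Matrix.mul_assoc T, Matrix.mul_nonsing_inv_cancel_right _ _ hdet,
    Matrix.mul_nonsing_inv_cancel_left _ _ hdet] at hM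
end
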